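/- Let n ≥ 3, K ≥ 1, ε > 0, and 0 < s ≤ n−2. Let (f, g) be a K-cinematic pair of maps ℝ^{n−2} → ℝ^{n−1} on [0,1]^{n−2}, set d := ‖f − g‖_{C²([0,1]^{n−2})}, and let δ satisfy 0 < δ ≤ d. Let X_f ⊂ [0,1]^{n−2} be a finite (δ, s, δ^{−ε})-set with #X_f ≤ δ^{−s}, and let X_g ⊂ [0,1]^{n−2} be any nonempty set. Define E(f) := {(x, f(x)) : x ∈ X_f} and E(g) := {(x, g(x)) : x ∈ X_g}, and let E^δ(f), E^δ(g) denote their open δ-neighbourhoods in ℝ^{2n−3}. Then L^{2n−3}( E^δ(f) ∩ E^δ(g) ) ≤ C(n,K) · δ^{−ε} · δ^{2n−3} / d^{s}, where C(n,K) depends only on n and K and L^{2n−3} is Lebesgue measure. -/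

import Mathlib

open MeasureTheory Set
open scoped ENNReal NNReal

/-- The unit cube `[0,1]^m` in `ℝ^m`. -/
def unitCube (m : ℕ) : Set (EuclideanSpace ℝ (Fin m)) :=
  {x | ∀ i, x i ∈ Set.Icc (0:ℝ) 1}

/-- The `C²` norm of a map on a subset: `sup_{x ∈ D} max(|h x|, ‖Dh x‖, ‖D²h x‖)`. -/
noncomputable def C2NormOn {m l : ℕ}
    (h : EuclideanSpace ℝ (Fin m) → EuclideanSpace ℝ (Fin l))
    (D : Set (EuclideanSpace ℝ (Fin m))) : ℝ :=
  ⨆ x ∈ D, max ‖h x‖ (max ‖fderiv ℝ h x‖ ‖fderiv ℝ (fderiv ℝ h) x‖)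

/-- A `K`-cinematic pair of maps on `[0,1]^m`. -/
def CinematicPair {m l : ℕ} (K : ℝ)
    (f g : EuclideanSpace ℝ (Fin m) → EuclideanSpace ℝ (Fin l)) : Prop :=
  ContDiff ℝ 2 f ∧ ContDiff ℝ 2 g ∧
  C2NormOn f (unitCube m) ≤ K ∧ C2NormOn g (unitCube m) ≤ K ∧
  ∀ x ∈ unitCube m, ∀ ξ : EuclideanSpace ℝ (Fin m), ‖ξ‖ = 1 →
    K⁻¹ * C2NormOn (f - g) (unitCube m) ≤ ‖f x - g x‖ + ‖fderiv ℝ f x ξ - fderiv ℝ g x ξ‖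

/-- The vertical `η`-neighbourhood of the graph of `f` over `D`. -/
def vertNbhd {m l : ℕ} (f : EuclideanSpace ℝ (Fin m) → EuclideanSpace ℝ (Fin l))
    (D : Set (EuclideanSpace ℝ (Fin m))) (η : ℝ) :
    Set (EuclideanSpace ℝ (Fin m) × EuclideanSpace ℝ (Fin l)) :=
  {p | p.1 ∈ D ∧ ‖p.2 - f p.1‖ < η}

/-- A finite `(δ, s, C)`-set in a metric space: every ball of radius `r ≥ δ` contains at
most `C · r^s · #A` points of `A`. -/
def IsDeltaSet {α : Type*} [PseudoMetricSpace α] (δ s C : ℝ) (A : Set α) : Prop :=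
  ∀ (x : α) (r : ℝ), δ ≤ r →
    ((A ∩ Metric.closedBall x r).ncard : ℝ) ≤ C * r ^ s * A.ncard

/-- The open Euclidean `δ`-neighbourhood of a set in `ℝ^m × ℝ^l ≅ ℝ^{m+l}`. -/
def euclNbhd {m l : ℕ}
    (A : Set (EuclideanSpace ℝ (Fin m) × EuclideanSpace ℝ (Fin l))) (δ : ℝ) :
    Set (EuclideanSpace ℝ (Fin m) × EuclideanSpace ℝ (Fin l)) :=
  {p | ∃ q ∈ A, Real.sqrt (‖p.1 - q.1‖ ^ 2 + ‖p.2 - q.2‖ ^ 2) < δ}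

/-!
A point of `E^δ(f) ∩ E^δ(g)` lies in `B(x, δ) × B(f x, δ)` for some `x ∈ X_f` with
`|f x - g x| ≤ 2 (1 + K) δ`, so the volume is at most `(2δ)^{2n-3}` times the number of such `x`.
For two of them at distance `t ≤ 1/(4K)`, Taylor's formula bounds `|D(f - g)(x)(y - x)|` by
`O((1 + K) δ) + d t²`, while transversality in the direction `y - x` forces it to be `≳ t d / K`;
hence `t ≤ r := 6 (1 + K)² δ / d`. Cutting `[0,1]^{n-2}` into `O_{n,K}(1)` cells of diameter
`≤ 1/(4K)`, each cell holds at most `δ^{-ε} r^s #X_f ≤ δ^{-ε} (r / δ)^s` of these points: the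
`(δ, s, δ^{-ε})` condition applies because `d ≤ 2K` makes `r ≥ δ`.
-/

lemma convex_unitCube (m : ℕ) : Convex ℝ (unitCube m) := by
  intro x hx y hy a b ha hb hab i
  have hxi := hx i
  have hyi := hy i
  change a * x i + b * y i ∈ Icc (0 : ℝ) 1
  constructor <;> nlinarith [hxi.1, hxi.2, hyi.1, hyi.2]

lemma isCompact_unitCube (m : ℕ) : IsCompact (unitCube m) := by
  have : unitCube m = WithLp.ofLp ⁻¹' univ.pi fun _ => Icc (0 : ℝ) 1 := by
    ext x
    rw [mem_preimage, mem_univ_pi]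
    rfl
  rw [this]
  exact (PiLp.continuousLinearEquiv 2 ℝ _).toHomeomorph.isCompact_preimage.mpr
    (isCompact_univ_pi fun _ => isCompact_Icc)

section C2Norm

variable {m l : ℕ} {h h' : EuclideanSpace ℝ (Fin m) → EuclideanSpace ℝ (Fin l)}
  {D : Set (EuclideanSpace ℝ (Fin m))}

lemma C2NormOn_nonneg : 0 ≤ C2NormOn h D :=
  Real.iSup_nonneg fun _ => Real.iSup_nonneg fun _ =>
    (norm_nonneg _).trans (le_max_left _ _)

lemma le_C2NormOn (hh : ContDiff ℝ 2 h) (hD : IsCompact D) {x : EuclideanSpace ℝ (Fin m)}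
    (hx : x ∈ D) :
    max ‖h x‖ (max ‖fderiv ℝ h x‖ ‖fderiv ℝ (fderiv ℝ h) x‖) ≤ C2NormOn h D := by
  set F := fun y => max ‖h y‖ (max ‖fderiv ℝ h y‖ ‖fderiv ℝ (fderiv ℝ h) y‖)
  have hcont : Continuous F :=
    hh.continuous.norm.max ((hh.continuous_fderiv two_ne_zero).norm.max
      ((hh.fderiv_right (m := 1) le_rfl).continuous_fderiv one_ne_zero).norm)
  refine le_ciSup₂ (f := fun y (_ : y ∈ D) => F y)
    ((hD.bddAbove_image hcont.continuousOn).mono ?_) x hx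
  intro r hr
  simp only [mem_iUnion, mem_range] at hr
  obtain ⟨y, hy, rfl⟩ := hr
  exact mem_image_of_mem _ hy

lemma norm_le_C2NormOn (hh : ContDiff ℝ 2 h) (hD : IsCompact D) {x : EuclideanSpace ℝ (Fin m)}
    (hx : x ∈ D) : ‖h x‖ ≤ C2NormOn h D :=
  (le_max_left _ _).trans (le_C2NormOn hh hD hx)

lemma norm_fderiv_le_C2NormOn (hh : ContDiff ℝ 2 h) (hD : IsCompact D)
    {x : EuclideanSpace ℝ (Fin m)} (hx : x ∈ D) : ‖fderiv ℝ h x‖ ≤ C2NormOn h D :=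
  ((le_max_left _ _).trans (le_max_right _ _)).trans (le_C2NormOn hh hD hx)

lemma norm_fderiv_fderiv_le_C2NormOn (hh : ContDiff ℝ 2 h) (hD : IsCompact D)
    {x : EuclideanSpace ℝ (Fin m)} (hx : x ∈ D) :
    ‖fderiv ℝ (fderiv ℝ h) x‖ ≤ C2NormOn h D :=
  ((le_max_right _ _).trans (le_max_right _ _)).trans (le_C2NormOn hh hD hx)

lemma C2NormOn_sub_le (hh : ContDiff ℝ 2 h) (hh' : ContDiff ℝ 2 h') (hD : IsCompact D) :
    C2NormOn (h - h') D ≤ C2NormOn h D + C2NormOn h' D := by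
  have hD1 : fderiv ℝ (h - h') = fderiv ℝ h - fderiv ℝ h' := funext fun x =>
    fderiv_sub (hh.differentiable two_ne_zero x) (hh'.differentiable two_ne_zero x)
  have hD2 : ∀ x, fderiv ℝ (fderiv ℝ h - fderiv ℝ h') x =
      fderiv ℝ (fderiv ℝ h) x - fderiv ℝ (fderiv ℝ h') x := fun x =>
    fderiv_sub ((hh.fderiv_right (m := 1) le_rfl).differentiable one_ne_zero x)
      ((hh'.fderiv_right (m := 1) le_rfl).differentiable one_ne_zero x)
  have hsum : 0 ≤ C2NormOn h D + C2NormOn h' D := add_nonneg C2NormOn_nonneg C2NormOn_nonneg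
  refine Real.iSup_le (fun x => Real.iSup_le (fun hx => ?_) hsum) hsum
  simp only [Pi.sub_apply, hD1, hD2]
  refine max_le (norm_sub_le_of_le ?_ ?_) (max_le (norm_sub_le_of_le ?_ ?_)
    (norm_sub_le_of_le (E := EuclideanSpace ℝ (Fin m) →L[ℝ] EuclideanSpace ℝ (Fin m) →L[ℝ]
      EuclideanSpace ℝ (Fin l)) ?_ ?_))
  exacts [norm_le_C2NormOn hh hD hx, norm_le_C2NormOn hh' hD hx,
    norm_fderiv_le_C2NormOn hh hD hx, norm_fderiv_le_C2NormOn hh' hD hx,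
    norm_fderiv_fderiv_le_C2NormOn hh hD hx, norm_fderiv_fderiv_le_C2NormOn hh' hD hx]

end C2Norm

section Taylor

variable {E F : Type*} [NormedAddCommGroup E] [NormedSpace ℝ E] [NormedAddCommGroup F]
  [NormedSpace ℝ F] {h : E → F} {s : Set E}

lemma Convex.norm_image_sub_sub_fderiv_le (hs : Convex ℝ s) (hh : ContDiff ℝ 2 h) {M : ℝ}
    (hM : ∀ z ∈ s, ‖fderiv ℝ (fderiv ℝ h) z‖ ≤ M) {x y : E} (hx : x ∈ s) (hy : y ∈ s) :
    ‖h y - h x - fderiv ℝ h x (y - x)‖ ≤ M * ‖y - x‖ ^ 2 := by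
  have hM0 : 0 ≤ M := (norm_nonneg (fderiv ℝ (fderiv ℝ h) x)).trans (hM x hx)
  have hDh : ∀ z ∈ s, ‖fderiv ℝ h z - fderiv ℝ h x‖ ≤ M * ‖z - x‖ := fun z hz =>
    hs.norm_image_sub_le_of_norm_fderiv_le
      (fun w _ => (hh.fderiv_right (m := 1) le_rfl).differentiable one_ne_zero w) hM hx hz
  calc ‖h y - h x - fderiv ℝ h x (y - x)‖ ≤ (M * ‖y - x‖) * ‖y - x‖ :=
        (convex_segment x y).norm_image_sub_le_of_norm_fderiv_le'
          (fun z _ => hh.differentiable two_ne_zero z)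
          (fun z hz => (hDh z (hs.segment_subset hx hy hz)).trans
            (mul_le_mul_of_nonneg_left (norm_sub_le_of_mem_segment hz) hM0))
          (left_mem_segment ℝ x y) (right_mem_segment ℝ x y)
    _ = M * ‖y - x‖ ^ 2 := by ring

lemma Convex.norm_sub_mul_le_of_transversal (hs : Convex ℝ s) (hh : ContDiff ℝ 2 h)
    {K d η : ℝ} (hK : 0 < K) (hd : ∀ z ∈ s, ‖fderiv ℝ (fderiv ℝ h) z‖ ≤ d) {x y : E}
    (hx : x ∈ s) (hy : y ∈ s)
    (htrans : ∀ ξ : E, ‖ξ‖ = 1 → K⁻¹ * d ≤ ‖h x‖ + ‖fderiv ℝ h x ξ‖)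
    (hhx : ‖h x‖ ≤ η) (hhy : ‖h y‖ ≤ η) (hxy : 4 * K * ‖y - x‖ ≤ 1) :
    ‖y - x‖ * d ≤ 3 * (1 + K) * η := by
  have hd0 : 0 ≤ d := (norm_nonneg (fderiv ℝ (fderiv ℝ h) x)).trans (hd x hx)
  have hη : 0 ≤ η := (norm_nonneg _).trans hhx
  rcases (norm_nonneg (y - x)).eq_or_lt with ht | ht
  · rw [← ht, zero_mul]
    positivity
  set t := ‖y - x‖
  set b := ‖fderiv ℝ h x (t⁻¹ • (y - x))‖
  have hξ : ‖t⁻¹ • (y - x)‖ = 1 := by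
    rw [norm_smul, norm_inv, norm_norm, inv_mul_cancel₀ ht.ne']
  have hd_le : d ≤ K * η + K * b := by
    have := htrans _ hξ
    rw [inv_mul_le_iff₀ hK] at this
    nlinarith
  have htb : t * b ≤ 2 * η + d * t ^ 2 := by
    have hlin : t * b = ‖fderiv ℝ h x (y - x)‖ := by
      rw [show b = ‖fderiv ℝ h x (t⁻¹ • (y - x))‖ from rfl, map_smul, norm_smul, norm_inv,
        norm_norm, mul_inv_cancel_left₀ ht.ne']
    have htaylor := hs.norm_image_sub_sub_fderiv_le hh hd hx hy
    have hsplit : fderiv ℝ h x (y - x) = (h y - h x) - (h y - h x - fderiv ℝ h x (y - x)) := by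
      abel
    rw [hlin, hsplit]
    refine (norm_sub_le _ _).trans (add_le_add ?_ htaylor)
    exact (norm_sub_le _ _).trans (by linarith)
  nlinarith [mul_le_mul_of_nonneg_left hd_le ht.le, mul_le_mul_of_nonneg_left htb hK.le,
    mul_le_mul_of_nonneg_right hxy (mul_nonneg ht.le hd0), mul_le_mul_of_nonneg_right hxy hη,
    mul_nonneg hK.le hη]

end Taylor

lemma volume_ball_le (k : ℕ) (c : EuclideanSpace ℝ (Fin k)) {r : ℝ} (hr : 0 < r) :
    volume (Metric.ball c r) ≤ ENNReal.ofReal ((2 * r) ^ k) := by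
  have hsub : Metric.ball c r ⊆ WithLp.ofLp ⁻¹' Metric.ball (WithLp.ofLp c) r := by
    intro z hz
    simpa using (PiLp.lipschitzWith_ofLp 2 fun _ : Fin k => ℝ).mapsTo_ball one_ne_zero c r hz
  calc volume (Metric.ball c r) ≤ volume (WithLp.ofLp ⁻¹' Metric.ball (WithLp.ofLp c) r) :=
        measure_mono hsub
    _ = ENNReal.ofReal ((2 * r) ^ k) := by
        rw [(PiLp.volume_preserving_ofLp (Fin k)).measure_preimage
          measurableSet_ball.nullMeasurableSet, Real.volume_pi_ball _ hr, Fintype.card_fin]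

lemma volume_ball_prod_ball_le {m l : ℕ} (x : EuclideanSpace ℝ (Fin m))
    (y : EuclideanSpace ℝ (Fin l)) {r : ℝ} (hr : 0 < r) :
    volume (Metric.ball x r ×ˢ Metric.ball y r) ≤ ENNReal.ofReal ((2 * r) ^ (m + l)) := by
  rw [Measure.volume_eq_prod, Measure.prod_prod, pow_add,
    ENNReal.ofReal_mul (by positivity)]
  exact mul_le_mul' (volume_ball_le m x hr) (volume_ball_le l y hr)

lemma exists_dist_lt_of_mem_euclNbhd {m l : ℕ}
    {f : EuclideanSpace ℝ (Fin m) → EuclideanSpace ℝ (Fin l)} {X : Set (EuclideanSpace ℝ (Fin m))}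
    {δ : ℝ} {p : EuclideanSpace ℝ (Fin m) × EuclideanSpace ℝ (Fin l)}
    (hp : p ∈ euclNbhd ((fun x => (x, f x)) '' X) δ) :
    ∃ x ∈ X, dist p.1 x < δ ∧ dist p.2 (f x) < δ := by
  obtain ⟨_, ⟨x, hx, rfl⟩, hpx⟩ := hp
  refine ⟨x, hx, ?_, ?_⟩ <;> rw [dist_eq_norm] <;> refine lt_of_le_of_lt ?_ hpx <;>
    refine Real.le_sqrt_of_sq_le ?_
  · nlinarith [sq_nonneg ‖p.2 - f x‖]
  · nlinarith [sq_nonneg ‖p.1 - x‖]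

lemma euclNbhd_inter_subset {m l : ℕ}
    {f g : EuclideanSpace ℝ (Fin m) → EuclideanSpace ℝ (Fin l)} {S : Set (EuclideanSpace ℝ (Fin m))}
    {K : ℝ} (hK : 0 ≤ K) (hg : ∀ x ∈ S, ∀ y ∈ S, dist (g x) (g y) ≤ K * dist x y)
    {Xf Xg : Set (EuclideanSpace ℝ (Fin m))} (hXf : Xf ⊆ S) (hXg : Xg ⊆ S) (δ : ℝ) :
    euclNbhd ((fun x => (x, f x)) '' Xf) δ ∩ euclNbhd ((fun x => (x, g x)) '' Xg) δ ⊆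
      ⋃ x ∈ {x ∈ Xf | dist (f x) (g x) ≤ 2 * (1 + K) * δ},
        Metric.ball x δ ×ˢ Metric.ball (f x) δ := by
  rintro p ⟨hpf, hpg⟩
  obtain ⟨x, hx, hpx1, hpx2⟩ := exists_dist_lt_of_mem_euclNbhd hpf
  obtain ⟨y, hy, hpy1, hpy2⟩ := exists_dist_lt_of_mem_euclNbhd hpg
  have hxy : dist y x < 2 * δ := (dist_triangle_left y x p.1).trans_lt (by linarith)
  have hgxy : dist (g y) (g x) ≤ K * (2 * δ) :=
    (hg y (hXg hy) x (hXf hx)).trans (mul_le_mul_of_nonneg_left hxy.le hK)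
  have hfg : dist (f x) (g x) ≤ 2 * (1 + K) * δ := by
    calc dist (f x) (g x) ≤ dist (f x) p.2 + dist p.2 (g y) + dist (g y) (g x) :=
          dist_triangle4 _ _ _ _
      _ ≤ δ + δ + K * (2 * δ) := by rw [dist_comm] at hpx2; linarith
      _ = 2 * (1 + K) * δ := by ring
  exact mem_biUnion (x := x) ⟨hx, hfg⟩ ⟨by rwa [Metric.mem_ball], by rwa [Metric.mem_ball]⟩

-- Clamping at `N - 1` puts the face `u = 1` into the last cell.
lemma min_floor_le_mul_le_add_one {N : ℕ} (hN : 0 < N) {u : ℝ} (hu : u ∈ Icc (0 : ℝ) 1) :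
    ((min ⌊N * u⌋₊ (N - 1) : ℕ) : ℝ) ≤ N * u ∧ N * u ≤ (min ⌊N * u⌋₊ (N - 1) : ℕ) + 1 := by
  have hNu : 0 ≤ (N : ℝ) * u := mul_nonneg N.cast_nonneg hu.1
  refine ⟨(Nat.cast_le.mpr (min_le_left _ _)).trans (Nat.floor_le hNu), ?_⟩
  rcases min_choice ⌊(N : ℝ) * u⌋₊ (N - 1) with h | h <;> rw [h]
  · exact (Nat.lt_floor_add_one _).le
  · rw [Nat.cast_sub hN, Nat.cast_one, sub_add_cancel]
    exact mul_le_of_le_one_right N.cast_nonneg hu.2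

lemma exists_unitCube_cells (m : ℕ) {N : ℕ} (hN : 0 < N) :
    ∃ φ : EuclideanSpace ℝ (Fin m) → Fin m → Fin N, ∀ x ∈ unitCube m, ∀ y ∈ unitCube m,
      φ x = φ y → dist x y ≤ √m / N := by
  refine ⟨fun x i => ⟨min ⌊N * x i⌋₊ (N - 1), (min_le_right _ _).trans_lt (by omega)⟩,
    fun x hx y hy hxy => ?_⟩
  have hN' : (0 : ℝ) < N := Nat.cast_pos.mpr hN
  have hcoord : ∀ i, dist (x i) (y i) ≤ 1 / N := fun i => by
    have hi := congrArg (fun φ => ((φ i : ℕ) : ℝ)) hxy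
    simp only at hi
    obtain ⟨hx1, hx2⟩ := min_floor_le_mul_le_add_one hN (hx i)
    obtain ⟨hy1, hy2⟩ := min_floor_le_mul_le_add_one hN (hy i)
    rw [Real.dist_eq, le_div_iff₀ hN', ← abs_of_pos hN', ← abs_mul]
    exact abs_le.mpr ⟨by linarith, by linarith⟩
  calc dist x y = √(∑ i, dist (x i) (y i) ^ 2) := EuclideanSpace.dist_eq x y
    _ ≤ √(∑ _i : Fin m, (1 / (N : ℝ)) ^ 2) := by gcongr with i; exact hcoord i
    _ = √m / N := by simp [Real.sqrt_sq hN'.le, div_eq_mul_inv]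

lemma Finset.natCast_card_le_mul_of_fiber_le {α β : Type*} [Fintype β] [DecidableEq β]
    (Z : Finset α) (φ : α → β) {B : ℝ} (hB : 0 ≤ B)
    (hfib : ∀ z ∈ Z, ((Z.filter (φ · = φ z)).card : ℝ) ≤ B) :
    (Z.card : ℝ) ≤ Fintype.card β * B := by
  have hcard : Z.card ≤ ⌊B⌋₊ * (Z.image φ).card := Finset.card_le_mul_card_image Z _ fun b hb => by
    obtain ⟨z, hz, rfl⟩ := Finset.mem_image.mp hb
    exact Nat.le_floor (hfib z hz)
  calc (Z.card : ℝ) ≤ ⌊B⌋₊ * (Z.image φ).card := by exact_mod_cast hcard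
    _ ≤ B * Fintype.card β := by
        gcongr
        · exact Nat.floor_le hB
        · exact Finset.card_le_univ _
    _ = Fintype.card β * B := mul_comm _ _

lemma card_le_of_isDeltaSet {m : ℕ} {N : ℕ} (hN : 0 < N) {δ s C r : ℝ}
    {A : Set (EuclideanSpace ℝ (Fin m))} (hA : A.Finite) (hAδ : IsDeltaSet δ s C A)
    (hB : 0 ≤ C * r ^ s * A.ncard) (hr : δ ≤ r) {Z : Finset (EuclideanSpace ℝ (Fin m))}
    (hZA : ↑Z ⊆ A) (hZ : ↑Z ⊆ unitCube m)
    (hsep : ∀ x ∈ Z, ∀ y ∈ Z, dist x y ≤ √m / N → dist x y ≤ r) :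
    (Z.card : ℝ) ≤ N ^ m * (C * r ^ s * A.ncard) := by
  obtain ⟨φ, hφ⟩ := exists_unitCube_cells m hN
  have := Finset.natCast_card_le_mul_of_fiber_le Z φ hB fun z hz => by
    set F := Z.filter (φ · = φ z)
    have hsub : (F : Set (EuclideanSpace ℝ (Fin m))) ⊆ A ∩ Metric.closedBall z r := by
      intro x hx
      rw [Finset.coe_filter] at hx
      exact ⟨hZA hx.1, hsep x hx.1 z hz (hφ x (hZ hx.1) z (hZ hz) hx.2)⟩
    calc (F.card : ℝ) = (F : Set (EuclideanSpace ℝ (Fin m))).ncard := by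
          rw [Set.ncard_coe_finset]
      _ ≤ (A ∩ Metric.closedBall z r).ncard := by
          exact_mod_cast Set.ncard_le_ncard hsub (hA.inter_of_left _)
      _ ≤ C * r ^ s * A.ncard := hAδ z r hr
  simpa using this

lemma volume_euclNbhd_inter_le {m l : ℕ}
    {f g : EuclideanSpace ℝ (Fin m) → EuclideanSpace ℝ (Fin l)} {S : Set (EuclideanSpace ℝ (Fin m))}
    {K : ℝ} (hK : 0 ≤ K) (hg : ∀ x ∈ S, ∀ y ∈ S, dist (g x) (g y) ≤ K * dist x y)
    {Xf Xg : Set (EuclideanSpace ℝ (Fin m))} (hXf : Xf ⊆ S) (hXg : Xg ⊆ S) {δ : ℝ} (hδ : 0 < δ)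
    {Z : Finset (EuclideanSpace ℝ (Fin m))}
    (hZ : ∀ x ∈ Xf, dist (f x) (g x) ≤ 2 * (1 + K) * δ → x ∈ Z) :
    volume (euclNbhd ((fun x => (x, f x)) '' Xf) δ ∩ euclNbhd ((fun x => (x, g x)) '' Xg) δ)
      ≤ Z.card * ENNReal.ofReal ((2 * δ) ^ (m + l)) := by
  calc _ ≤ volume (⋃ x ∈ Z, Metric.ball x δ ×ˢ Metric.ball (f x) δ) := by
        refine measure_mono ((euclNbhd_inter_subset hK hg hXf hXg δ).trans ?_)
        exact biUnion_subset_biUnion_left fun x hx => hZ x hx.1 hx.2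
    _ ≤ ∑ x ∈ Z, volume (Metric.ball x δ ×ˢ Metric.ball (f x) δ) :=
        measure_biUnion_finset_le _ _
    _ ≤ ∑ _x ∈ Z, ENNReal.ofReal ((2 * δ) ^ (m + l)) :=
        Finset.sum_le_sum fun x _ => volume_ball_prod_ball_le x (f x) hδ
    _ = Z.card * ENNReal.ofReal ((2 * δ) ^ (m + l)) := by
        rw [Finset.sum_const, nsmul_eq_mul]

namespace CinematicPair

variable {m l : ℕ} {K : ℝ} {f g : EuclideanSpace ℝ (Fin m) → EuclideanSpace ℝ (Fin l)}

lemma C2NormOn_sub_le (hfg : CinematicPair K f g) : C2NormOn (f - g) (unitCube m) ≤ 2 * K := by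
  obtain ⟨hf, hg, hfK, hgK, -⟩ := hfg
  linarith [_root_.C2NormOn_sub_le hf hg (isCompact_unitCube m)]

lemma dist_apply_right_le (hfg : CinematicPair K f g) {x y : EuclideanSpace ℝ (Fin m)}
    (hx : x ∈ unitCube m) (hy : y ∈ unitCube m) : dist (g x) (g y) ≤ K * dist x y := by
  obtain ⟨-, hg, -, hgK, -⟩ := hfg
  rw [dist_eq_norm, dist_eq_norm]
  exact (convex_unitCube m).norm_image_sub_le_of_norm_fderiv_le
    (fun z _ => hg.differentiable two_ne_zero z)
    (fun z hz => (norm_fderiv_le_C2NormOn hg (isCompact_unitCube m) hz).trans hgK) hy hx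

lemma dist_mul_C2NormOn_le (hfg : CinematicPair K f g) (hK : 0 < K) {η : ℝ}
    {x y : EuclideanSpace ℝ (Fin m)} (hx : x ∈ unitCube m) (hy : y ∈ unitCube m)
    (hfgx : dist (f x) (g x) ≤ η) (hfgy : dist (f y) (g y) ≤ η) (hxy : 4 * K * dist x y ≤ 1) :
    dist x y * C2NormOn (f - g) (unitCube m) ≤ 3 * (1 + K) * η := by
  obtain ⟨hf, hg, -, -, htrans⟩ := hfg
  have hfg' : ContDiff ℝ 2 (f - g) := hf.sub hg
  have hD : ∀ z, fderiv ℝ (f - g) z = fderiv ℝ f z - fderiv ℝ g z := fun z =>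
    fderiv_sub (hf.differentiable two_ne_zero z) (hg.differentiable two_ne_zero z)
  rw [dist_eq_norm] at hfgx hfgy
  rw [dist_comm, dist_eq_norm] at hxy ⊢
  refine (convex_unitCube m).norm_sub_mul_le_of_transversal hfg' hK
    (fun z hz => norm_fderiv_fderiv_le_C2NormOn hfg' (isCompact_unitCube m) hz) hx hy
    (fun ξ hξ => ?_) hfgx hfgy hxy
  simpa only [Pi.sub_apply, hD, sub_apply] using htrans x hx ξ hξ

lemma card_le_of_forall_dist_le (hfg : CinematicPair K f g) (hK : 0 < K) {δ s C : ℝ} (hδ : 0 < δ)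
    (hδd : δ ≤ C2NormOn (f - g) (unitCube m)) {A : Set (EuclideanSpace ℝ (Fin m))}
    (hA : A.Finite) (hAS : A ⊆ unitCube m) (hAδ : IsDeltaSet δ s C A) (hC : 0 ≤ C)
    {Z : Finset (EuclideanSpace ℝ (Fin m))}
    (hZ : ∀ x ∈ Z, x ∈ A ∧ dist (f x) (g x) ≤ 2 * (1 + K) * δ) :
    (Z.card : ℝ) ≤ ((⌈4 * K * √m⌉₊ + 1 : ℕ) : ℝ) ^ m *
      (C * (6 * (1 + K) ^ 2 * δ / C2NormOn (f - g) (unitCube m)) ^ s * A.ncard) := by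
  set d := C2NormOn (f - g) (unitCube m)
  have hd : 0 < d := hδ.trans_le hδd
  have hZA : ↑Z ⊆ A := fun x hx => (hZ x hx).1
  set N := ⌈4 * K * √m⌉₊ + 1
  have hNpos : 0 < N := Nat.succ_pos _
  have hN0 : (0 : ℝ) < N := Nat.cast_pos.mpr hNpos
  refine card_le_of_isDeltaSet hNpos hA hAδ (r := 6 * (1 + K) ^ 2 * δ / d) (by positivity) ?_ hZA
    (hZA.trans hAS) fun x hx y hy hxy => ?_
  · have hd6 : d ≤ 6 * (1 + K) ^ 2 := by nlinarith [hfg.C2NormOn_sub_le]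
    rw [le_div_iff₀ hd]
    nlinarith [mul_le_mul_of_nonneg_left hd6 hδ.le]
  · have hcell : 4 * K * dist x y ≤ 1 := by
      have hN : 4 * K * √m ≤ N := by
        simp only [N, Nat.cast_add, Nat.cast_one]
        linarith [Nat.le_ceil (4 * K * √m)]
      rw [le_div_iff₀ hN0] at hxy
      refine le_of_mul_le_mul_right ?_ hN0
      nlinarith [mul_le_mul_of_nonneg_left hxy (by positivity : (0 : ℝ) ≤ 4 * K)]
    rw [le_div_iff₀ hd]
    nlinarith [hfg.dist_mul_C2NormOn_le hK (hAS (hZ x hx).1) (hAS (hZ y hy).1) (hZ x hx).2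
      (hZ y hy).2 hcell]

end CinematicPair

lemma rpow_div_mul_le_pow_div_rpow {c δ d s a : ℝ} {n : ℕ} (hc : 1 ≤ c) (hδ : 0 < δ)
    (hd : 0 < d) (hsn : s ≤ n) (ha : a ≤ δ ^ (-s)) : (c * δ / d) ^ s * a ≤ c ^ n / d ^ s := by
  have hc0 : 0 ≤ c := zero_le_one.trans hc
  calc (c * δ / d) ^ s * a ≤ (c * δ / d) ^ s * δ ^ (-s) := by gcongr
    _ = c ^ s / d ^ s := by
        rw [Real.div_rpow (by positivity) hd.le, Real.mul_rpow hc0 hδ.le, Real.rpow_neg hδ.le]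
        field_simp
    _ ≤ c ^ n / d ^ s := by
        gcongr
        rw [← Real.rpow_natCast]
        exact Real.rpow_le_rpow_of_exponent_le hc hsn

theorem stmt11_general (n : ℕ) (K : ℝ) (hK : 1 ≤ K) :
    ∃ C : ℝ, 0 < C ∧
      ∀ ε s : ℝ, 0 < ε → 0 < s → s ≤ (n : ℝ) - 2 →
      ∀ f g : EuclideanSpace ℝ (Fin (n-2)) → EuclideanSpace ℝ (Fin (n-1)),
        CinematicPair K f g →
        ∀ δ : ℝ, 0 < δ → δ ≤ C2NormOn (f - g) (unitCube (n-2)) →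
        ∀ Xf Xg : Set (EuclideanSpace ℝ (Fin (n-2))),
          Xf.Finite → Xf ⊆ unitCube (n-2) →
          IsDeltaSet δ s (δ ^ (-ε)) Xf → (Xf.ncard : ℝ) ≤ δ ^ (-s) →
          Xg.Nonempty → Xg ⊆ unitCube (n-2) →
          volume (euclNbhd ((fun x => (x, f x)) '' Xf) δ ∩
                  euclNbhd ((fun x => (x, g x)) '' Xg) δ)
            ≤ ENNReal.ofReal
                (C * δ ^ (-ε) * δ ^ (2*n-3) /
                  C2NormOn (f - g) (unitCube (n-2)) ^ s) := by
  have hK0 : 0 < K := one_pos.trans_le hK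
  set N : ℕ := ⌈4 * K * √((n - 2 : ℕ) : ℝ)⌉₊ + 1
  refine ⟨2 ^ (2 * n - 3) * (N : ℝ) ^ (n - 2) * (6 * (1 + K) ^ 2) ^ n, by positivity, ?_⟩
  intro ε s _ _ hsn f g hfg δ hδ hδd Xf Xg hXf hXfS hXfδ hXfcard _ hXgS
  set d := C2NormOn (f - g) (unitCube (n - 2))
  have hd : 0 < d := hδ.trans_le hδd
  set Z := hXf.toFinset.filter fun x => dist (f x) (g x) ≤ 2 * (1 + K) * δ
  have hvol := volume_euclNbhd_inter_le hK0.le (fun x hx y hy => hfg.dist_apply_right_le hx hy)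
    hXfS hXgS hδ (f := f) (Z := Z) fun x hx hfgx => by simp [Z, hx, hfgx]
  have hcard := hfg.card_le_of_forall_dist_le hK0 hδ hδd hXf hXfS hXfδ (by positivity) (Z := Z)
    fun x hx => by simpa [Z] using hx
  have hrs := rpow_div_mul_le_pow_div_rpow (c := 6 * (1 + K) ^ 2) (n := n) (by nlinarith) hδ hd
    (by linarith) hXfcard
  have hZ : (Z.card : ℝ) ≤ N ^ (n - 2) * δ ^ (-ε) * ((6 * (1 + K) ^ 2) ^ n / d ^ s) :=
    calc (Z.card : ℝ)
        ≤ N ^ (n - 2) * δ ^ (-ε) * ((6 * (1 + K) ^ 2 * δ / d) ^ s * Xf.ncard) :=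
          hcard.trans_eq (by ring)
      _ ≤ _ := by gcongr
  rw [show n - 2 + (n - 1) = 2 * n - 3 by omega, ← ENNReal.ofReal_natCast,
    ← ENNReal.ofReal_mul (by positivity)] at hvol
  refine hvol.trans (ENNReal.ofReal_le_ofReal ?_)
  calc (Z.card : ℝ) * (2 * δ) ^ (2 * n - 3)
      ≤ N ^ (n - 2) * δ ^ (-ε) * ((6 * (1 + K) ^ 2) ^ n / d ^ s) * (2 * δ) ^ (2 * n - 3) := by
        gcongr
    _ = _ := by rw [mul_pow]; ring

/-- For a `K`-cinematic pair `(f,g)` with `d = ‖f−g‖_{C²}`, `0 < δ ≤ d`,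
a finite `(δ,s,δ^{−ε})`-set `X_f ⊆ [0,1]^{n−2}` with `#X_f ≤ δ^{−s}`, and any nonempty
`X_g ⊆ [0,1]^{n−2}`, the Euclidean `δ`-neighbourhoods of the graphs `E(f)`, `E(g)` satisfy
`L^{2n−3}(E^δ(f) ∩ E^δ(g)) ≤ C(n,K) δ^{−ε} δ^{2n−3} / d^s`. -/
theorem stmt11 (n : ℕ) (hn : 3 ≤ n) (K : ℝ) (hK : 1 ≤ K) :
    ∃ C : ℝ, 0 < C ∧
      ∀ ε s : ℝ, 0 < ε → 0 < s → s ≤ (n : ℝ) - 2 →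
      ∀ f g : EuclideanSpace ℝ (Fin (n-2)) → EuclideanSpace ℝ (Fin (n-1)),
        CinematicPair K f g →
        ∀ δ : ℝ, 0 < δ → δ ≤ C2NormOn (f - g) (unitCube (n-2)) →
        ∀ Xf Xg : Set (EuclideanSpace ℝ (Fin (n-2))),
          Xf.Finite → Xf ⊆ unitCube (n-2) →
          IsDeltaSet δ s (δ ^ (-ε)) Xf → (Xf.ncard : ℝ) ≤ δ ^ (-s) →
          Xg.Nonempty → Xg ⊆ unitCube (n-2) →
          volume (euclNbhd ((fun x => (x, f x)) '' Xf) δ ∩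
                  euclNbhd ((fun x => (x, g x)) '' Xg) δ)
            ≤ ENNReal.ofReal
                (C * δ ^ (-ε) * δ ^ (2*n-3) /
                  C2NormOn (f - g) (unitCube (n-2)) ^ s) :=
  stmt11_general n K hK
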